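/- For fixed reals x, y > 0 with x ≠ y, the Neumann free-fermion kernel K^N(u,v) = (1/(2π)) + (1/π) ∑_{k=1}^{N-1} cos(ku/2) cos(kv/2) satisfies lim_{N→∞} (2π/N) K^N(2πx/N, 2πy/N) = sin(π(x-y))/(π(x-y)) + sin(π(x+y))/(π(x+y)). -/

import Mathlib

/-!
By the product-to-sum formula the scaled kernel is `1/N` plus two Riemann sums
`(1/N) ∑_{0<k<N} cos (k c / N)` with `c = π (x ∓ y)`. Lagrange's identity evaluates these sums in
closed form as `(sin (c - c/2N) - sin (c/2N)) / (2N sin (c/2N))`, and since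
`2N sin (c/2N) = c · sinc (c/2N) → c`, each tends to `sin c / c`.
-/

open Real Finset Filter

open scoped Topology

lemma sum_Icc_cos_mul_mul_two_sin_half (θ : ℝ) (m : ℕ) :
    (∑ k ∈ Icc 1 m, cos (k * θ)) * (2 * sin (θ / 2)) =
      sin ((m + 1 / 2) * θ) - sin (θ / 2) := by
  induction m with
  | zero => simp [one_div, inv_mul_eq_div]
  | succ n ih =>
    rw [sum_Icc_succ_top (by omega), add_mul, ih, Nat.cast_succ]
    have h := sin_sub_sin ((n + 1 + 1 / 2) * θ) ((n + 1 / 2) * θ)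
    ring_nf at h ⊢
    linarith

lemma mul_sinc (x : ℝ) : x * sinc x = sin x := by
  rcases eq_or_ne x 0 with rfl | hx
  · simp
  · rw [sinc_of_ne_zero hx, mul_div_cancel₀ _ hx]

lemma tendsto_inv_mul_sum_Icc_cos {c : ℝ} (hc : c ≠ 0) :
    Tendsto (fun N : ℕ => (N : ℝ)⁻¹ * ∑ k ∈ Icc 1 (N - 1), cos (k * (c / N))) atTop
      (𝓝 (sin c / c)) := by
  set t : ℕ → ℝ := fun N => c / (2 * N)
  have ht : Tendsto t atTop (𝓝 0) := by
    simpa [t, div_mul_eq_div_div] using tendsto_const_div_atTop_nhds_zero_nat (c / 2)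
  -- Lagrange's identity, with `2 N sin (c / 2N)` rewritten as `c * sinc (c / 2N)`
  have key : ∀ᶠ N : ℕ in atTop,
      sin (c - t N) - sin (t N) = ((N : ℝ)⁻¹ * ∑ k ∈ Icc 1 (N - 1), cos (k * (c / N))) *
        (c * sinc (t N)) := by
    filter_upwards [eventually_ge_atTop 1] with N hN
    have hN' : (N : ℝ) ≠ 0 := by positivity
    have h := sum_Icc_cos_mul_mul_two_sin_half (c / N) (N - 1)
    rw [Nat.cast_pred hN] at h
    have ht_eq : t N = c / N / 2 := by simp only [t]; ring
    have hsinc : c * sinc (t N) = N * (2 * sin (t N)) := by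
      rw [← mul_sinc (t N), ht_eq]; field_simp
    have harg : c - t N = (N - 1 + 1 / 2) * (c / N) := by rw [ht_eq]; field_simp; ring
    rw [hsinc, harg, ht_eq, ← h, mul_mul_mul_comm, inv_mul_cancel₀ hN', one_mul]
  have hden : Tendsto (fun N => c * sinc (t N)) atTop (𝓝 c) := by
    simpa using (continuous_sinc.tendsto 0).comp ht |>.const_mul c
  have hnum : Tendsto (fun N => sin (c - t N) - sin (t N)) atTop (𝓝 (sin c)) := by
    simpa using ((continuous_sin.tendsto _).comp (ht.const_sub c)).sub
      ((continuous_sin.tendsto 0).comp ht)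
  refine (hnum.div hden hc).congr' ?_
  filter_upwards [key, hden.eventually_ne hc] with N hN hne
  simp only [Pi.div_apply, hN, mul_div_cancel_right₀ _ hne]

lemma scaled_neumann_kernel_eq (x y : ℝ) {N : ℕ} (hN : N ≠ 0) :
    (2 * π / N) * (1 / (2 * π) + (1 / π) * ∑ k ∈ Icc 1 (N - 1),
        cos (k * (2 * π * x / N) / 2) * cos (k * (2 * π * y / N) / 2)) =
      (N : ℝ)⁻¹ + (N : ℝ)⁻¹ * ∑ k ∈ Icc 1 (N - 1), cos (k * (π * (x - y) / N)) +
        (N : ℝ)⁻¹ * ∑ k ∈ Icc 1 (N - 1), cos (k * (π * (x + y) / N)) := by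
  have product_to_sum : ∀ k : ℕ,
      cos (k * (2 * π * x / N) / 2) * cos (k * (2 * π * y / N) / 2) =
        (cos (k * (π * (x - y) / N)) + cos (k * (π * (x + y) / N))) / 2 := by
    intro k
    rw [eq_div_iff two_ne_zero, mul_comm, ← mul_assoc, two_mul_cos_mul_cos]
    ring_nf
  simp only [product_to_sum, ← sum_div, sum_add_distrib]
  generalize ∑ k ∈ Icc 1 (N - 1), cos (k * (π * (x - y) / N)) = A
  generalize ∑ k ∈ Icc 1 (N - 1), cos (k * (π * (x + y) / N)) = B
  field_simp
  ring

theorem neumann_edge_scaling_to_bessel (x y : ℝ) (hx : 0 < x) (hy : 0 < y)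
    (hxy : x ≠ y) :
    Tendsto
      (fun N : ℕ => (2 * Real.pi / N) *
        (1 / (2 * Real.pi) + (1 / Real.pi) * ∑ k ∈ Finset.Icc 1 (N - 1),
          Real.cos (k * (2 * Real.pi * x / N) / 2) *
            Real.cos (k * (2 * Real.pi * y / N) / 2)))
      atTop
      (nhds (Real.sin (Real.pi * (x - y)) / (Real.pi * (x - y)) +
        Real.sin (Real.pi * (x + y)) / (Real.pi * (x + y)))) := by
  have hdiff := tendsto_inv_mul_sum_Icc_cos (mul_ne_zero pi_ne_zero (sub_ne_zero.2 hxy))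
  have hsum := tendsto_inv_mul_sum_Icc_cos (mul_ne_zero pi_ne_zero (add_pos hx hy).ne')
  have hlim := (tendsto_inv_atTop_nhds_zero_nat.add hdiff).add hsum
  rw [zero_add] at hlim
  refine hlim.congr' ?_
  filter_upwards [eventually_ne_atTop 0] with N hN
  exact (scaled_neumann_kernel_eq x y hN).symm
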